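/- For all Schwartz functions f, g ∈ S(ℝ⁴, ℂ) and j ∈ {1, 2}: (1) the Leibniz rule ∂_j(f ⋆ g) = (∂_j f) ⋆ g + f ⋆ (∂_j g) holds pointwise on ℝ⁴ (all twisted convolutions being absolutely convergent); (2) ∂_j(f*) = (∂_j f)*; and (3) ∂₁(∂₂ f) = ∂₂(∂₁ f). -/

import Mathlib

open MeasureTheory Complex
open scoped ENNReal

noncomputable section

/-- The skew-symmetric matrix `τ`. -/
def tauMat (hb th B : ℝ) : Fin 4 → Fin 4 → ℝ :=
  ![![0, B / (2 * Real.pi * hb), -1 / (2 * Real.pi * hb), 0],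
    ![-(B / (2 * Real.pi * hb)), 0, 0, -1 / (2 * Real.pi * hb)],
    ![1 / (2 * Real.pi * hb), 0, 0, th / (2 * Real.pi * hb ^ 2)],
    ![0, 1 / (2 * Real.pi * hb), -(th / (2 * Real.pi * hb ^ 2)), 0]]

/-- The pairing `⟨p, τq⟩ = Σ_{n,m} p_n τ_{nm} q_m`. -/
def tauPair (hb th B : ℝ) (p q : Fin 4 → ℝ) : ℝ :=
  ∑ n : Fin 4, ∑ m : Fin 4, p n * tauMat hb th B n m * q m

/-- The twisted convolution `(f ⋆ g)(p) = ∫ f(q) g(p−q) exp(πi⟨p, τq⟩) dq`. -/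
def twConv (hb th B : ℝ) (f g : (Fin 4 → ℝ) → ℂ) (p : Fin 4 → ℝ) : ℂ :=
  ∫ q : Fin 4 → ℝ, f q * g (p - q) * Complex.exp (Real.pi * Complex.I * tauPair hb th B p q)

/-- The involution `f*(q) = conj (f (−q))`. -/
def invol (f : (Fin 4 → ℝ) → ℂ) : (Fin 4 → ℝ) → ℂ := fun q => starRingEnd ℂ (f (-q))

/-- `q♯₁ = B·q₂ − q₃` and `q♯₂ = −B·q₁ − q₄`. -/
def qsharp (B : ℝ) : Fin 2 → (Fin 4 → ℝ) → ℝ :=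
  ![fun q => B * q 1 - q 2, fun q => -B * q 0 - q 3]

/-- The derivation `(∂_j f)(q) = −i·q♯_j·f(q)`. -/
def dop (B : ℝ) (j : Fin 2) (f : (Fin 4 → ℝ) → ℂ) : (Fin 4 → ℝ) → ℂ := fun q =>
  -Complex.I * qsharp B j q * f q

/-!
Since `q♯_j` is a linear form, `∂_j` is multiplication by a function of temperate growth and
so maps Schwartz functions to Schwartz functions; against a bounded continuous factor and a
unimodular phase this gives absolute convergence. Inside the twisted convolution the
splitting `p♯_j = q♯_j + (p - q)♯_j` is the Leibniz rule, oddness and reality of `q♯_j` give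
compatibility with the involution, and multiplication operators commute.
-/

open ContinuousLinearMap in
def qsharpCLM (B : ℝ) : Fin 2 → (Fin 4 → ℝ) →L[ℝ] ℝ :=
  ![B • proj 1 - proj 2, -B • proj 0 - proj 3]

lemma coe_qsharpCLM (B : ℝ) (j : Fin 2) : ⇑(qsharpCLM B j) = qsharp B j := by
  fin_cases j <;> ext q <;> simp [qsharpCLM, qsharp]

lemma qsharp_sub (B : ℝ) (j : Fin 2) (p q : Fin 4 → ℝ) :
    qsharp B j (p - q) = qsharp B j p - qsharp B j q := by
  simp only [← coe_qsharpCLM, map_sub]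

lemma qsharp_neg (B : ℝ) (j : Fin 2) (q : Fin 4 → ℝ) :
    qsharp B j (-q) = -qsharp B j q := by
  simp only [← coe_qsharpCLM, map_neg]

lemma hasTemperateGrowth_qsharp (B : ℝ) (j : Fin 2) :
    Function.HasTemperateGrowth fun q => (-I * qsharp B j q : ℂ) := by
  simp only [← coe_qsharpCLM]
  have := (ofRealCLM.comp (qsharpCLM B j)).hasTemperateGrowth
  fun_prop

lemma norm_exp_tauPair (hb th B : ℝ) (p q : Fin 4 → ℝ) :
    ‖exp (Real.pi * I * tauPair hb th B p q)‖ = 1 := by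
  simp [Complex.norm_exp]

def dopSchwartz (B : ℝ) (j : Fin 2) :
    SchwartzMap (Fin 4 → ℝ) ℂ →L[ℂ] SchwartzMap (Fin 4 → ℝ) ℂ :=
  SchwartzMap.smulLeftCLM ℂ fun q => -I * qsharp B j q

lemma coe_dopSchwartz (B : ℝ) (j : Fin 2) (f : SchwartzMap (Fin 4 → ℝ) ℂ) :
    ⇑(dopSchwartz B j f) = dop B j ⇑f := by
  ext q
  rw [dopSchwartz, SchwartzMap.smulLeftCLM_apply_apply (hasTemperateGrowth_qsharp B j),
    smul_eq_mul, dop]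

lemma MeasureTheory.Integrable.twConv_integrand (hb th B : ℝ) {f g : (Fin 4 → ℝ) → ℂ} {C : ℝ}
    (hf : Integrable f) (hg : Continuous g) (hgC : ∀ x, ‖g x‖ ≤ C) (p : Fin 4 → ℝ) :
    Integrable fun q => f q * g (p - q) * exp (Real.pi * I * tauPair hb th B p q) := by
  refine (hf.mul_bdd (c := C) ?_ ?_).mul_bdd (c := 1) ?_ ?_
  · exact (hg.comp (continuous_sub_left p)).aestronglyMeasurable
  · exact .of_forall fun q => hgC (p - q)
  · refine Continuous.aestronglyMeasurable ?_
    unfold tauPair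
    fun_prop
  · exact .of_forall fun q => (norm_exp_tauPair hb th B p q).le

lemma SchwartzMap.integrable_twConv_integrand (hb th B : ℝ) (f g : SchwartzMap (Fin 4 → ℝ) ℂ)
    (p : Fin 4 → ℝ) :
    Integrable fun q => f q * g (p - q) * exp (Real.pi * I * tauPair hb th B p q) :=
  f.integrable.twConv_integrand hb th B g.continuous
    g.toBoundedContinuousFunction.norm_coe_le_norm p

lemma dop_twConv (hb th B : ℝ) (j : Fin 2) {f g : (Fin 4 → ℝ) → ℂ} (p : Fin 4 → ℝ)
    (hf : Integrable fun q => dop B j f q * g (p - q) * exp (Real.pi * I * tauPair hb th B p q))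
    (hg : Integrable fun q => f q * dop B j g (p - q) * exp (Real.pi * I * tauPair hb th B p q)) :
    dop B j (twConv hb th B f g) p =
      twConv hb th B (dop B j f) g p + twConv hb th B f (dop B j g) p := by
  rw [dop, twConv, twConv, twConv, ← integral_add hf hg, ← integral_const_mul]
  congr 1 with q
  simp only [dop, qsharp_sub, ofReal_sub]
  ring

lemma dop_invol (B : ℝ) (j : Fin 2) (f : (Fin 4 → ℝ) → ℂ) :
    dop B j (invol f) = invol (dop B j f) := by
  ext q
  simp only [dop, invol, qsharp_neg, map_mul, map_neg, conj_I, conj_ofReal, ofReal_neg]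
  ring

lemma dop_comm (B : ℝ) (i j : Fin 2) (f : (Fin 4 → ℝ) → ℂ) :
    dop B i (dop B j f) = dop B j (dop B i f) := by
  ext q
  simp only [dop]
  ring

theorem stmt8_general (hb th B : ℝ)
    (f g : SchwartzMap (Fin 4 → ℝ) ℂ) (j : Fin 2) :
    -- all twisted convolutions below are absolutely convergent
    (∀ p : Fin 4 → ℝ,
      (Integrable fun q : Fin 4 → ℝ =>
        (f : (Fin 4 → ℝ) → ℂ) q * (g : (Fin 4 → ℝ) → ℂ) (p - q) *
          Complex.exp (Real.pi * Complex.I * tauPair hb th B p q)) ∧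
      (Integrable fun q : Fin 4 → ℝ =>
        dop B j ⇑f q * (g : (Fin 4 → ℝ) → ℂ) (p - q) *
          Complex.exp (Real.pi * Complex.I * tauPair hb th B p q)) ∧
      (Integrable fun q : Fin 4 → ℝ =>
        (f : (Fin 4 → ℝ) → ℂ) q * dop B j ⇑g (p - q) *
          Complex.exp (Real.pi * Complex.I * tauPair hb th B p q))) ∧
    -- (1) Leibniz rule
    (∀ p : Fin 4 → ℝ,
      dop B j (twConv hb th B ⇑f ⇑g) p =
        twConv hb th B (dop B j ⇑f) ⇑g p + twConv hb th B ⇑f (dop B j ⇑g) p) ∧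
    -- (2) compatibility with the involution
    dop B j (invol ⇑f) = invol (dop B j ⇑f) ∧
    -- (3) commutativity of the derivations
    dop B 0 (dop B 1 ⇑f) = dop B 1 (dop B 0 ⇑f) := by
  have hconv : ∀ p, _ ∧ _ ∧ _ := fun p =>
    ⟨f.integrable_twConv_integrand hb th B g p,
      coe_dopSchwartz B j f ▸ (dopSchwartz B j f).integrable_twConv_integrand hb th B g p,
      coe_dopSchwartz B j g ▸ f.integrable_twConv_integrand hb th B (dopSchwartz B j g) p⟩
  exact ⟨hconv, fun p => dop_twConv hb th B j p (hconv p).2.1 (hconv p).2.2,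
    dop_invol B j f, dop_comm B 0 1 f⟩

theorem stmt8 (hb th B r s : ℝ) (hhb : hb ≠ 0) (hth : th ≠ 0) (hB : B ≠ 0)
    (hnd : hb - th * B ≠ 0) (hrs : r * th * B ≠ hb)
    (f g : SchwartzMap (Fin 4 → ℝ) ℂ) (j : Fin 2) :
    -- all twisted convolutions below are absolutely convergent
    (∀ p : Fin 4 → ℝ,
      (Integrable fun q : Fin 4 → ℝ =>
        (f : (Fin 4 → ℝ) → ℂ) q * (g : (Fin 4 → ℝ) → ℂ) (p - q) *
          Complex.exp (Real.pi * Complex.I * tauPair hb th B p q)) ∧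
      (Integrable fun q : Fin 4 → ℝ =>
        dop B j ⇑f q * (g : (Fin 4 → ℝ) → ℂ) (p - q) *
          Complex.exp (Real.pi * Complex.I * tauPair hb th B p q)) ∧
      (Integrable fun q : Fin 4 → ℝ =>
        (f : (Fin 4 → ℝ) → ℂ) q * dop B j ⇑g (p - q) *
          Complex.exp (Real.pi * Complex.I * tauPair hb th B p q))) ∧
    -- (1) Leibniz rule
    (∀ p : Fin 4 → ℝ,
      dop B j (twConv hb th B ⇑f ⇑g) p =
        twConv hb th B (dop B j ⇑f) ⇑g p + twConv hb th B ⇑f (dop B j ⇑g) p) ∧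
    -- (2) compatibility with the involution
    dop B j (invol ⇑f) = invol (dop B j ⇑f) ∧
    -- (3) commutativity of the derivations
    dop B 0 (dop B 1 ⇑f) = dop B 1 (dop B 0 ⇑f) :=
  stmt8_general hb th B f g j
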